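/- arXiv:2112.10856 — 3 statements merged into one kernel-verified Lean document; each statement's English description precedes it below -/
import Mathlib

section
/- Let A_1,...,A_K be bounded operators from H1 to H2 with closed range such that R(A_k) ⊆ N(A_{k'}*) and R(A_k*) ⊆ N(A_{k'}) for all k ≠ k'. If ∑_{k=1}^K A_k is injective, then ∑_{k=1}^K A_k* A_k is invertible and for each k_0, A_{k_0}† is the unique solution X of the equation (∑_{k=1}^K A_k* A_k) X = A_{k_0}*. -/
/-!
The range of a Moore–Penrose inverse `B k` lies in the range of `(A k)*`, so the orthogonality
hypothesis gives `A j ∘ B k = 0` for `j ≠ k`. Hence `A j ∘ (∑ k, B k A k) = A j B j A j = A j`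
for every `j`, and injectivity of `∑ A k` forces `∑ k, B k A k = 1`. With `S = ∑ k, (A k)* A k`
this gives `S (∑ k, B k (B k)*) = ∑ k, (A k)* (B k)* = ∑ k, (B k A k)* = 1`, so the self-adjoint
`S` is invertible, and `S B k₀ = (A k₀)* A k₀ B k₀ = (A k₀)*` identifies the unique solution.
-/

noncomputable section
open ContinuousLinearMap
open scoped InnerProductSpace

/-- `X` is the Moore–Penrose inverse of `A`: the four Penrose equations. -/
def IsMPInv {H₁ H₂ : Type*} [NormedAddCommGroup H₁] [InnerProductSpace ℂ H₁] [CompleteSpace H₁]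
    [NormedAddCommGroup H₂] [InnerProductSpace ℂ H₂] [CompleteSpace H₂]
    (A : H₁ →L[ℂ] H₂) (X : H₂ →L[ℂ] H₁) : Prop :=
  A ∘L X ∘L A = A ∧ X ∘L A ∘L X = X ∧
    adjoint (A ∘L X) = A ∘L X ∧ adjoint (X ∘L A) = X ∘L A

variable {H₁ H₂ : Type*} [NormedAddCommGroup H₁] [InnerProductSpace ℂ H₁] [CompleteSpace H₁]
    [NormedAddCommGroup H₂] [InnerProductSpace ℂ H₂] [CompleteSpace H₂]

theorem IsSelfAdjoint.isUnit_of_mul_eq_one {R : Type*} [Monoid R] [StarMul R] {a b : R}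
    (ha : IsSelfAdjoint a) (hab : a * b = 1) : IsUnit a := by
  refine isUnit_iff_exists_and_exists.mpr ⟨⟨b, hab⟩, star b, ?_⟩
  simpa only [star_mul, ha.star_eq, star_one] using congrArg star hab

theorem ContinuousLinearMap.comp_right_inj_of_isUnit {𝕜 E F : Type*} [NormedField 𝕜]
    [SeminormedAddCommGroup E] [NormedSpace 𝕜 E] [SeminormedAddCommGroup F] [NormedSpace 𝕜 F]
    {S : E →L[𝕜] E} (hS : IsUnit S) {X Y : F →L[𝕜] E} : S ∘L X = S ∘L Y ↔ X = Y := by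
  obtain ⟨u, rfl⟩ := hS
  refine ⟨fun h => ?_, fun h => h ▸ rfl⟩
  have h' := congrArg (fun T => (↑u⁻¹ : E →L[𝕜] E) ∘L T) h
  simpa only [← comp_assoc, ← mul_def, Units.inv_mul, one_def, id_comp] using h'

namespace IsMPInv

variable {A : H₁ →L[ℂ] H₂} {X : H₂ →L[ℂ] H₁}

theorem adjoint_comp_comp (h : IsMPInv A X) : adjoint A ∘L A ∘L X = adjoint A := by
  rw [← h.2.2.1, ← adjoint_comp, comp_assoc, h.1]

theorem adjoint_comp_comp_adjoint (h : IsMPInv A X) : adjoint A ∘L adjoint X ∘L X = X := by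
  rw [← comp_assoc, ← adjoint_comp, h.2.2.2]
  exact h.2.1

theorem comp_eq_zero_of_range_adjoint_le_ker {H₃ : Type*} [NormedAddCommGroup H₃]
    [InnerProductSpace ℂ H₃] [CompleteSpace H₃] {A' : H₁ →L[ℂ] H₃} (h : IsMPInv A X)
    (horth : LinearMap.range (adjoint A : H₂ →ₗ[ℂ] H₁) ≤ LinearMap.ker (A' : H₁ →ₗ[ℂ] H₃)) :
    A' ∘L X = 0 := by
  ext y
  rw [← h.adjoint_comp_comp_adjoint]
  exact horth (LinearMap.mem_range_self _ _)

end IsMPInv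

section OrthogonalFamily

variable {ι : Type*} {A : ι → H₁ →L[ℂ] H₂} {B : ι → H₂ →L[ℂ] H₁}

theorem comp_mpInv_eq_zero_of_ne (hMP : ∀ k, IsMPInv (A k) (B k))
    (horth : ∀ k k', k ≠ k' →
      LinearMap.range (adjoint (A k) : H₂ →ₗ[ℂ] H₁) ≤ LinearMap.ker (A k' : H₁ →ₗ[ℂ] H₂))
    {j k : ι} (hjk : j ≠ k) : A j ∘L B k = 0 :=
  (hMP k).comp_eq_zero_of_range_adjoint_le_ker (horth k j hjk.symm)

variable [Fintype ι] (hMP : ∀ k, IsMPInv (A k) (B k))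
    (horth : ∀ k k', k ≠ k' →
      LinearMap.range (adjoint (A k) : H₂ →ₗ[ℂ] H₁) ≤ LinearMap.ker (A k' : H₁ →ₗ[ℂ] H₂))
include hMP horth

theorem comp_sum_mpInv_comp (j : ι) : A j ∘L ∑ k, B k ∘L A k = A j := by
  classical
  rw [comp_finsetSum, Fintype.sum_eq_single j fun k hk => by
    rw [← comp_assoc, comp_mpInv_eq_zero_of_ne hMP horth (Ne.symm hk), zero_comp]]
  exact (hMP j).1

theorem sum_mpInv_comp_eq_one (hinj : Function.Injective (∑ k, A k)) :
    ∑ k, B k ∘L A k = 1 := by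
  ext x
  refine hinj ?_
  rw [Finset.sum_apply, Finset.sum_apply]
  exact Finset.sum_congr rfl fun j _ => DFunLike.congr_fun (comp_sum_mpInv_comp hMP horth j) x

theorem sum_adjoint_comp_self_comp_mpInv (k₀ : ι) :
    (∑ k, adjoint (A k) ∘L A k) ∘L B k₀ = adjoint (A k₀) := by
  classical
  rw [finsetSum_comp, Fintype.sum_eq_single k₀ fun k hk => by
    rw [comp_assoc, comp_mpInv_eq_zero_of_ne hMP horth hk, comp_zero]]
  exact (hMP k₀).adjoint_comp_comp

theorem sum_adjoint_comp_self_mul_sum_mpInv_comp_adjoint (hinj : Function.Injective (∑ k, A k)) :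
    (∑ k, adjoint (A k) ∘L A k) * ∑ k, B k ∘L adjoint (B k) = 1 := by
  classical
  rw [← sum_mpInv_comp_eq_one hMP horth hinj, mul_def, finsetSum_comp]
  refine Finset.sum_congr rfl fun k _ => ?_
  rw [comp_finsetSum, Fintype.sum_eq_single k fun k' hk' => by
    rw [comp_assoc, ← comp_assoc (A k), comp_mpInv_eq_zero_of_ne hMP horth (Ne.symm hk'),
      zero_comp, comp_zero]]
  show (adjoint (A k) ∘L A k ∘L B k) ∘L adjoint (B k) = B k ∘L A k
  rw [(hMP k).adjoint_comp_comp, ← adjoint_comp, (hMP k).2.2.2]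

end OrthogonalFamily

theorem stmt7_general {K : ℕ} (A : Fin K → (H₁ →L[ℂ] H₂)) (B : Fin K → (H₂ →L[ℂ] H₁))
    (horth2 : ∀ k k', k ≠ k' → LinearMap.range (adjoint (A k) : H₂ →ₗ[ℂ] H₁) ≤ LinearMap.ker (A k' : H₁ →ₗ[ℂ] H₂))
    (hMP : ∀ k, IsMPInv (A k) (B k))
    (hinj : Function.Injective (∑ k, A k)) :
    IsUnit (∑ k, adjoint (A k) ∘L A k) ∧
    ∀ k₀, ∀ X : H₂ →L[ℂ] H₁,
      (∑ k, adjoint (A k) ∘L A k) ∘L X = adjoint (A k₀) ↔ X = B k₀ := by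
  have hS : IsUnit (∑ k, adjoint (A k) ∘L A k) := by
    refine IsSelfAdjoint.isUnit_of_mul_eq_one ?_
      (sum_adjoint_comp_self_mul_sum_mpInv_comp_adjoint hMP horth2 hinj)
    exact isSelfAdjoint_sum _ fun k _ => (isPositive_adjoint_comp_self (A k)).isSelfAdjoint
  refine ⟨hS, fun k₀ X => ?_⟩
  rw [← sum_adjoint_comp_self_comp_mpInv hMP horth2 k₀]
  exact comp_right_inj_of_isUnit hS

theorem stmt7 {K : ℕ} (A : Fin K → (H₁ →L[ℂ] H₂)) (B : Fin K → (H₂ →L[ℂ] H₁))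
    (hclosed : ∀ k, IsClosed (LinearMap.range (A k : H₁ →ₗ[ℂ] H₂) : Set H₂))
    (horth1 : ∀ k k', k ≠ k' → LinearMap.range (A k : H₁ →ₗ[ℂ] H₂) ≤ LinearMap.ker (adjoint (A k') : H₂ →ₗ[ℂ] H₁))
    (horth2 : ∀ k k', k ≠ k' → LinearMap.range (adjoint (A k) : H₂ →ₗ[ℂ] H₁) ≤ LinearMap.ker (A k' : H₁ →ₗ[ℂ] H₂))
    (hMP : ∀ k, IsMPInv (A k) (B k))
    (hinj : Function.Injective (∑ k, A k)) :
    IsUnit (∑ k, adjoint (A k) ∘L A k) ∧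
    ∀ k₀, ∀ X : H₂ →L[ℂ] H₁,
      (∑ k, adjoint (A k) ∘L A k) ∘L X = adjoint (A k₀) ↔ X = B k₀ :=
  stmt7_general A B horth2 hMP hinj
end
end

section
/- Let n ≥ 2 and let C_{1,−1} = circ(1,−1,0,...,0) be the n×n circulant matrix with first row (1,−1,0,...,0), and let e be the all-ones vector. Then C_{1,−1} + e eᵗ = circ(2,0,1,...,1) is invertible with inverse −(1/(2n)) circ(1,3,5,...,2n−1) + ((n²+2)/(2n²)) e eᵗ. -/
noncomputable section
open Matrix

/-- The circulant matrix with first row `c`; each subsequent row is the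
cyclic right shift of the previous one. -/
def circ {n : ℕ} {α : Type*} (c : Fin n → α) : Matrix (Fin n) (Fin n) α :=
  Matrix.of fun i j => c (j - i)

/-! A product of two `circ` matrices is the `circ` matrix of the cyclic convolution of their first
rows. For the rows `a = (1, -1, 0, …, 0) + (1, …, 1)` and `b j = -(2j + 1)/(2n) + (n² + 2)/(2n²)`
that convolution is `b j - b (j - 1) + ∑ b`; the difference term equals `1 - 1/n` at `j = 0` and
`-1/n` elsewhere (the odd numbers jump from `2n - 1` back to `1` there), while `∑ b = 1/n` because
the first `n` odd numbers add up to `n²`. Hence `circ a * circ b = circ (Pi.single 0 1) = 1`. -/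

section Circ

variable {n : ℕ} {α : Type*}

theorem circ_eq_transpose_circulant (c : Fin n → α) : circ c = (circulant c)ᵀ := rfl

theorem circ_add [Add α] (c d : Fin n → α) : circ (c + d) = circ c + circ d := rfl

theorem circ_smul {R : Type*} [SMul R α] (k : R) (c : Fin n → α) : circ (k • c) = k • circ c :=
  rfl

theorem circ_one [MulOneClass α] : circ (1 : Fin n → α) = vecMulVec (fun _ => 1) (fun _ => 1) := by
  ext i j
  simp [circ, vecMulVec_apply]

theorem circ_single_zero_one [NeZero n] [Zero α] [One α] :
    circ (Pi.single 0 1 : Fin n → α) = 1 := by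
  rw [circ_eq_transpose_circulant, circulant_single_one, transpose_one]

theorem circ_mul [CommSemiring α] (c d : Fin n → α) :
    circ c * circ d = circ (circulant d *ᵥ c) := by
  rw [circ_eq_transpose_circulant, circ_eq_transpose_circulant, ← transpose_mul,
    Fin.circulant_mul, circ_eq_transpose_circulant]

theorem circulant_mulVec_single_sub_single_add_one [NeZero n] [Ring α] (b : Fin n → α) :
    circulant b *ᵥ (Pi.single 0 1 - Pi.single 1 1 + 1) = fun j => b j - b (j - 1) + ∑ k, b k := by
  ext j
  simp only [mulVec_add, mulVec_sub, mulVec_single_one, Pi.add_apply, Pi.sub_apply,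
    col_apply, circulant_apply, sub_zero]
  rw [mulVec, dotProduct_one]
  congr 1
  exact Fintype.sum_equiv (Equiv.subLeft j) (fun k => b (j - k)) b fun _ => rfl

theorem ite_val_eq_zero_ite_val_eq_one [NeZero n] [Ring α] (hn : 1 < n) :
    (fun j : Fin n => if (j : ℕ) = 0 then (1 : α) else if (j : ℕ) = 1 then -1 else 0) =
      Pi.single 0 1 - Pi.single 1 1 := by
  have hone : ((1 : Fin n) : ℕ) = 1 := by rw [Fin.val_one', Nat.mod_eq_of_lt hn]
  ext j
  simp only [Pi.sub_apply, Pi.single_apply, Fin.ext_iff, Fin.val_zero, hone]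
  split_ifs <;> simp_all

end Circ

section OddNumbers

variable {R : Type*}

theorem Fin.sum_two_mul_val_add_one [CommSemiring R] (n : ℕ) :
    ∑ j : Fin n, (2 * ((j : ℕ) : R) + 1) = (n : R) ^ 2 := by
  rw [Fin.sum_univ_eq_sum_range (fun i => 2 * (i : R) + 1)]
  induction n with
  | zero => simp
  | succ k ih => rw [Finset.sum_range_succ, ih]; push_cast; ring

theorem Fin.two_mul_val_add_one_sub_pred [CommRing R] {n : ℕ} [NeZero n] (j : Fin n) :
    (2 * ((j : ℕ) : R) + 1) - (2 * (((j - 1 : Fin n) : ℕ) : R) + 1) =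
      if j = 0 then 2 - 2 * (n : R) else 2 := by
  split_ifs with hj
  · obtain ⟨m, rfl⟩ := Nat.exists_eq_add_one_of_ne_zero (NeZero.ne n)
    subst hj
    rw [zero_sub, Fin.coe_neg_one, Fin.val_zero]
    push_cast
    ring
  · rw [Fin.val_sub_one_of_ne_zero hj,
      Nat.cast_sub (Nat.one_le_iff_ne_zero.mpr (Fin.val_ne_zero_iff.mpr hj))]
    push_cast
    ring

end OddNumbers

theorem circulant_mulVec_eq_single_zero {n : ℕ} [NeZero n] :
    circulant (-(1 / (2 * (n : ℝ))) • (fun j : Fin n => 2 * ((j : ℕ) : ℝ) + 1) +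
        (((n : ℝ) ^ 2 + 2) / (2 * (n : ℝ) ^ 2)) • 1) *ᵥ
      (Pi.single 0 1 - Pi.single 1 1 + 1) = Pi.single 0 1 := by
  have hn : (n : ℝ) ≠ 0 := Nat.cast_ne_zero.mpr (NeZero.ne n)
  have hsum : ∑ k : Fin n, (-(1 / (2 * (n : ℝ))) * (2 * ((k : ℕ) : ℝ) + 1) +
      ((n : ℝ) ^ 2 + 2) / (2 * (n : ℝ) ^ 2)) = 1 / (n : ℝ) := by
    rw [Finset.sum_add_distrib, ← Finset.mul_sum, Fin.sum_two_mul_val_add_one, Finset.sum_const,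
      Finset.card_univ, Fintype.card_fin, nsmul_eq_mul]
    field_simp
    ring
  rw [circulant_mulVec_single_sub_single_add_one]
  ext j
  have hstep := Fin.two_mul_val_add_one_sub_pred (R := ℝ) j
  simp only [Pi.add_apply, Pi.smul_apply, Pi.one_apply, smul_eq_mul, mul_one, hsum,
    Pi.single_apply]
  split_ifs at hstep ⊢ <;> field_simp <;> linear_combination -(n : ℝ) * hstep

theorem stmt15 {n : ℕ} (hn : 2 ≤ n)
    (C : Matrix (Fin n) (Fin n) ℝ)
    (hC : C = circ (fun j => if (j : ℕ) = 0 then (1 : ℝ) else if (j : ℕ) = 1 then -1 else 0)) :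
    C + vecMulVec (fun _ => (1 : ℝ)) (fun _ => 1) =
      circ (fun j => if (j : ℕ) = 0 then (2 : ℝ) else if (j : ℕ) = 1 then 0 else 1) ∧
    IsUnit (C + vecMulVec (fun _ => (1 : ℝ)) (fun _ => 1)) ∧
    (C + vecMulVec (fun _ => (1 : ℝ)) (fun _ => 1))⁻¹ =
      -(1/(2*(n : ℝ))) • circ (fun j => 2*((j : ℕ) : ℝ)+1) +
        (((n : ℝ)^2+2)/(2*(n : ℝ)^2)) • vecMulVec (fun _ => (1 : ℝ)) (fun _ => 1) := by
  have : NeZero n := ⟨by omega⟩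
  have hA : C + vecMulVec (fun _ => (1 : ℝ)) (fun _ => 1) =
      circ (Pi.single 0 1 - Pi.single 1 1 + 1) := by
    rw [hC, ite_val_eq_zero_ite_val_eq_one (by omega), ← circ_one, ← circ_add]
  have hmul : (C + vecMulVec (fun _ => (1 : ℝ)) (fun _ => 1)) *
      (-(1/(2*(n : ℝ))) • circ (fun j => 2*((j : ℕ) : ℝ)+1) +
        (((n : ℝ)^2+2)/(2*(n : ℝ)^2)) • vecMulVec (fun _ => (1 : ℝ)) (fun _ => 1)) = 1 := by
    rw [hA, ← circ_one, ← circ_smul, ← circ_smul, ← circ_add, circ_mul,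
      circulant_mulVec_eq_single_zero, circ_single_zero_one]
  refine ⟨?_, (isUnit_iff_isUnit_det _).mpr (isUnit_det_of_right_inverse hmul),
    inv_eq_right_inv hmul⟩
  rw [hC, ← circ_one, ← circ_add]
  congr 1
  ext j
  simp only [Pi.add_apply, Pi.one_apply]
  split_ifs <;> norm_num
end
end

section
/- Let c ∈ ℂⁿ with ∑_{j=1}^n c(j) = 0 and let α ≠ 0. Then (circ(c))† = (circ(c(1)+α, ..., c(n)+α))† − (1/(n²α)) e eᵗ, where e is the all-ones vector. -/
/-!
Let `J = e eᵗ` and `P = J / n`, the orthogonal projection onto the span of `e`. Since the row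
and column sums of `circ c` all equal `∑ c = 0`, we have `circ c * P = P * circ c = 0`, while
`circ (c + α) = circ c + (α n) P`. A summand `β P` living on the orthogonal complement of both
range and corange of `A` is inverted separately: `(A + β P)† = A† + β⁻¹ P`, because
`(A + β P)(A† + β⁻¹ P) = A A† + P` and `(A† + β⁻¹ P)(A + β P) = A† A + P`. With `β = α n`
the correction is `(α n)⁻¹ J / n = J / (n² α)`.
-/

noncomputable section
open Matrix

/-- `X` is the Moore–Penrose inverse of the complex matrix `A`. -/
def IsMP {m n : ℕ} (A : Matrix (Fin m) (Fin n) ℂ) (X : Matrix (Fin n) (Fin m) ℂ) : Prop :=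
  A * X * A = A ∧ X * A * X = X ∧ (A * X)ᴴ = A * X ∧ (X * A)ᴴ = X * A

namespace IsMP

variable {m n : ℕ} {A : Matrix (Fin m) (Fin n) ℂ} {X Y : Matrix (Fin n) (Fin m) ℂ}

theorem unique (hX : IsMP A X) (hY : IsMP A Y) : X = Y := by
  obtain ⟨h1, h2, h3, h4⟩ := hX
  obtain ⟨g1, g2, g3, g4⟩ := hY
  have hX_eq : X = X * A * Y := by
    calc X = X * A * X := h2.symm
    _ = X * (A * X)ᴴ := by rw [h3, Matrix.mul_assoc]
    _ = X * (A * Y * A * X)ᴴ := by rw [g1]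
    _ = X * (A * X)ᴴ * (A * Y)ᴴ := by simp only [conjTranspose_mul, Matrix.mul_assoc]
    _ = X * A * X * (A * Y) := by rw [h3, g3]; simp only [Matrix.mul_assoc]
    _ = X * A * Y := by rw [h2, Matrix.mul_assoc]
  have hY_eq : Y = X * A * Y := by
    calc Y = Y * A * Y := g2.symm
    _ = (Y * A)ᴴ * Y := by rw [g4]
    _ = (Y * (A * X * A))ᴴ * Y := by rw [h1]
    _ = (X * A)ᴴ * (Y * A)ᴴ * Y := by simp only [conjTranspose_mul, Matrix.mul_assoc]
    _ = X * A * (Y * A * Y) := by rw [h4, g4]; simp only [Matrix.mul_assoc]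
    _ = X * A * Y := by rw [g2]
  rw [hX_eq, ← hY_eq]

theorem mul_eq_zero_of_conjTranspose_mul_eq_zero {l : Type*} [Fintype l] (hX : IsMP A X)
    {M : Matrix (Fin m) l ℂ} (hM : Aᴴ * M = 0) : X * M = 0 := by
  obtain ⟨-, h2, h3, -⟩ := hX
  calc X * M = X * (A * X)ᴴ * M := by rw [h3, ← Matrix.mul_assoc, h2]
  _ = X * Xᴴ * (Aᴴ * M) := by simp only [conjTranspose_mul, Matrix.mul_assoc]
  _ = 0 := by rw [hM, Matrix.mul_zero]

theorem mul_eq_zero_of_mul_conjTranspose_eq_zero {l : Type*} [Fintype l] (hX : IsMP A X)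
    {M : Matrix l (Fin n) ℂ} (hM : M * Aᴴ = 0) : M * X = 0 := by
  obtain ⟨-, h2, -, h4⟩ := hX
  calc M * X = M * ((X * A)ᴴ * X) := by rw [h4, h2]
  _ = M * Aᴴ * (Xᴴ * X) := by simp only [conjTranspose_mul, Matrix.mul_assoc]
  _ = 0 := by rw [hM, Matrix.zero_mul]

end IsMP

theorem IsMP.add_smul_of_isStarProjection {n : ℕ} {A X P : Matrix (Fin n) (Fin n) ℂ}
    (hX : IsMP A X) (hP : IsStarProjection P) (hAP : A * P = 0) (hPA : P * A = 0) (β : ℂ) :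
    IsMP (A + β • P) (X + β⁻¹ • P) := by
  obtain rfl | hβ := eq_or_ne β 0
  · simpa using hX
  have hPP : P * P = P := hP.isIdempotentElem
  have hPH : Pᴴ = P := hP.isSelfAdjoint
  have hXP : X * P = 0 := hX.mul_eq_zero_of_conjTranspose_mul_eq_zero <| by
    rw [← hPH, ← conjTranspose_mul, hPA, conjTranspose_zero]
  have hPX : P * X = 0 := hX.mul_eq_zero_of_mul_conjTranspose_eq_zero <| by
    rw [← hPH, ← conjTranspose_mul, hAP, conjTranspose_zero]
  obtain ⟨h1, h2, h3, h4⟩ := hX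
  have hBZ : (A + β • P) * (X + β⁻¹ • P) = A * X + P := by
    simp [Matrix.add_mul, Matrix.mul_add, hAP, hPX, hPP, smul_smul, hβ]
  have hZB : (X + β⁻¹ • P) * (A + β • P) = X * A + P := by
    simp [Matrix.add_mul, Matrix.mul_add, hXP, hPA, hPP, smul_smul, hβ]
  refine ⟨?_, ?_, ?_, ?_⟩
  · rw [hBZ]
    simp [Matrix.add_mul, Matrix.mul_add, Matrix.mul_assoc A X P, hXP, hPA, hPP, h1]
  · rw [hZB]
    simp [Matrix.add_mul, Matrix.mul_add, Matrix.mul_assoc X A P, hAP, hPX, hPP, h2]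
  · rw [hBZ, conjTranspose_add, h3, hPH]
  · rw [hZB, conjTranspose_add, h4, hPH]

section Circulant

variable {n : ℕ} {R : Type*}

theorem circ_mulVec_const_one [NonAssocSemiring R] (c : Fin n → R) :
    circ c *ᵥ (fun _ => 1) = fun _ => ∑ j, c j := by
  ext i
  have : NeZero n := ⟨i.pos.ne'⟩
  simpa [circ, mulVec, dotProduct] using (Equiv.subRight i).sum_comp c

theorem const_one_vecMul_circ [NonAssocSemiring R] (c : Fin n → R) :
    (fun _ => 1) ᵥ* circ c = fun _ => ∑ j, c j := by
  ext j
  have : NeZero n := ⟨j.pos.ne'⟩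
  simpa [circ, vecMul, dotProduct] using (Equiv.subLeft j).sum_comp c

theorem circ_add_const [NonAssocSemiring R] (c : Fin n → R) (a : R) :
    circ (fun j => c j + a) = circ c + a • vecMulVec (fun _ => 1) (fun _ => 1) := by
  ext i j
  simp [circ, vecMulVec]

end Circulant

theorem isStarProjection_inv_natCast_smul_vecMulVec_one (n : ℕ) :
    IsStarProjection ((n : ℂ)⁻¹ • vecMulVec (fun _ : Fin n => (1 : ℂ)) (fun _ : Fin n => 1)) := by
  refine ⟨?_, ?_⟩
  · ext i j
    have hn : (n : ℂ) ≠ 0 := Nat.cast_ne_zero.mpr i.pos.ne'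
    simp only [vecMulVec, smul_of, mul_apply, of_apply, Pi.smul_apply,
      smul_eq_mul, mul_one, Finset.sum_const, Finset.card_univ, Fintype.card_fin, nsmul_eq_mul,
      Matrix.smul_apply]
    field_simp
  · ext i j
    simp [vecMulVec]

theorem stmt17_general {n : ℕ} (c : Fin n → ℂ) (hc : ∑ j, c j = 0)
    (α : ℂ) (X Y : Matrix (Fin n) (Fin n) ℂ)
    (hX : IsMP (circ c) X) (hY : IsMP (circ (fun j => c j + α)) Y) :
    X = Y - (1/((n : ℂ)^2 * α)) • vecMulVec (fun _ => (1 : ℂ)) (fun _ => 1) := by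
  set J := vecMulVec (fun _ : Fin n => (1 : ℂ)) (fun _ => 1)
  have hAJ : circ c * J = 0 := by
    rw [mul_vecMulVec, circ_mulVec_const_one, hc]
    exact zero_vecMulVec _
  have hJA : J * circ c = 0 := by
    rw [vecMulVec_mul, const_one_vecMul_circ, hc]
    exact vecMulVec_zero _
  have hB : circ c + (α * n) • ((n : ℂ)⁻¹ • J) = circ (fun j => c j + α) := by
    ext i j
    have hn : (n : ℂ) ≠ 0 := Nat.cast_ne_zero.mpr i.pos.ne'
    simp [J, circ_add_const, smul_smul, hn]
  have hMP := hX.add_smul_of_isStarProjection (isStarProjection_inv_natCast_smul_vecMulVec_one n)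
    (by rw [Matrix.mul_smul, hAJ, smul_zero]) (by rw [Matrix.smul_mul, hJA, smul_zero]) (α * n)
  rw [hB] at hMP
  rw [hY.unique hMP]
  module

theorem stmt17 {n : ℕ} (hn : 2 ≤ n) (c : Fin n → ℂ) (hc : ∑ j, c j = 0)
    (α : ℂ) (hα : α ≠ 0) (X Y : Matrix (Fin n) (Fin n) ℂ)
    (hX : IsMP (circ c) X) (hY : IsMP (circ (fun j => c j + α)) Y) :
    X = Y - (1/((n : ℂ)^2 * α)) • vecMulVec (fun _ => (1 : ℂ)) (fun _ => 1) :=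
  stmt17_general c hc α X Y hX hY
end
end
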